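/- Every connected bipartite graph G with bipartition (A,B), 1 ≤ |A| ≤ |B|, satisfying γ(G) = |A| also satisfies γ(G) = β(G). -/

import Mathlib

open Finset

variable {V : Type} [Fintype V] [DecidableEq V]

def IsDomSet (G : SimpleGraph V) (D : Finset V) : Prop :=
  ∀ v : V, v ∉ D → ∃ u ∈ D, G.Adj u v

noncomputable def domNum (G : SimpleGraph V) : ℕ :=
  sInf {n | ∃ D : Finset V, IsDomSet G D ∧ D.card = n}

def IsVertexCover (G : SimpleGraph V) (C : Finset V) : Prop :=
  ∀ ⦃u v : V⦄, G.Adj u v → u ∈ C ∨ v ∈ C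

noncomputable def coverNum (G : SimpleGraph V) : ℕ :=
  sInf {n | ∃ C : Finset V, IsVertexCover G C ∧ C.card = n}

def IsIndepFinset (G : SimpleGraph V) (I : Finset V) : Prop :=
  ∀ u ∈ I, ∀ v ∈ I, ¬ G.Adj u v

noncomputable def indepNum (G : SimpleGraph V) : ℕ :=
  sSup {n | ∃ I : Finset V, IsIndepFinset G I ∧ I.card = n}

def IsLeaf (G : SimpleGraph V) [DecidableRel G.Adj] (v : V) : Prop :=
  G.degree v = 1

def IsSupport (G : SimpleGraph V) [DecidableRel G.Adj] (v : V) : Prop :=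
  ∃ u, G.Adj v u ∧ IsLeaf G u

def IsWeakSupport (G : SimpleGraph V) [DecidableRel G.Adj] (v : V) : Prop :=
  ((G.neighborFinset v).filter fun l => G.degree l = 1).card = 1

def IsBipartition (G : SimpleGraph V) (A B : Finset V) : Prop :=
  A ∪ B = Finset.univ ∧ Disjoint A B ∧
    ∀ ⦃u v : V⦄, G.Adj u v → (u ∈ A ∧ v ∈ B) ∨ (u ∈ B ∧ v ∈ A)

/-! The side `A` covers every edge, so `β(G) ≤ |A| = γ(G)`. Conversely, in a graph without
isolated vertices every vertex cover dominates: a vertex outside the cover has a neighbour, and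
the edge to it must be covered by that neighbour. Hence `γ(G) ≤ β(G)`. -/

section

variable {W : Type} {G : SimpleGraph W}

theorem IsBipartition.isVertexCover_left [Fintype W] [DecidableEq W] {A B : Finset W}
    (h : IsBipartition G A B) : IsVertexCover G A := by
  intro u v huv
  rcases h.2.2 huv with ⟨hu, -⟩ | ⟨-, hv⟩
  · exact .inl hu
  · exact .inr hv

theorem IsBipartition.nontrivial [Fintype W] [DecidableEq W] {A B : Finset W}
    (h : IsBipartition G A B) (hA : A.Nonempty) (hB : B.Nonempty) : Nontrivial W := by
  obtain ⟨a, ha⟩ := hA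
  obtain ⟨b, hb⟩ := hB
  exact nontrivial_of_ne a b (ne_of_mem_of_not_mem ha (disjoint_right.mp h.2.1 hb))

theorem IsVertexCover.isDomSet {C : Finset W} (hC : IsVertexCover G C)
    (hG : ∀ v, ∃ u, G.Adj v u) : IsDomSet G C := by
  intro v hv
  obtain ⟨u, hvu⟩ := hG v
  exact ⟨u, (hC hvu).resolve_left hv, hvu.symm⟩

theorem domNum_le_card {D : Finset W} (hD : IsDomSet G D) :
    domNum G ≤ D.card :=
  Nat.sInf_le ⟨D, hD, rfl⟩

theorem coverNum_le_card {C : Finset W} (hC : IsVertexCover G C) :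
    coverNum G ≤ C.card :=
  Nat.sInf_le ⟨C, hC, rfl⟩

theorem exists_isVertexCover_card_eq_coverNum [Fintype W] (G : SimpleGraph W) :
    ∃ C : Finset W, IsVertexCover G C ∧ C.card = coverNum G :=
  Nat.sInf_mem (s := {n | ∃ C : Finset W, IsVertexCover G C ∧ C.card = n})
    ⟨_, univ, fun _ _ _ => .inl (mem_univ _), rfl⟩

theorem domNum_le_coverNum [Fintype W] (hG : ∀ v, ∃ u, G.Adj v u) :
    domNum G ≤ coverNum G := by
  obtain ⟨C, hC, hCcard⟩ := exists_isVertexCover_card_eq_coverNum G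
  exact hCcard ▸ domNum_le_card (hC.isDomSet hG)

end

theorem domNum_eq_coverNum_of_domNum_eq_smaller_side (G : SimpleGraph V)
    (A B : Finset V) (hconn : G.Connected) (hbip : IsBipartition G A B)
    (hA : 1 ≤ A.card) (hAB : A.card ≤ B.card) (hdom : domNum G = A.card) :
    domNum G = coverNum G := by
  have : Nontrivial V :=
    hbip.nontrivial (card_pos.mp hA) (card_pos.mp (hA.trans hAB))
  exact le_antisymm (domNum_le_coverNum hconn.preconnected.exists_adj_of_nontrivial)
    (hdom ▸ coverNum_le_card hbip.isVertexCover_left)
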